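/- (Condition C1.) Suppose 𝒢 and ℋ are singletons of integrable nonnegative random variables, and there exists an 𝓕-measurable random variable whose cumulative distribution function under ℙ is continuous. Then V₁(x) = V(x) for every x > 0, for every x > 0 there exists a pure test that simultaneously attains V(x) and V₁(x), and x ↦ V₁(x) is continuous, concave, and non-decreasing on (0,∞). -/

import Mathlib

open MeasureTheory

namespace QH

variable {Ω : Type*} [MeasurableSpace Ω]

/-- The set of nonnegative measurable random variables. -/
def L0plus (Ω : Type*) [MeasurableSpace Ω] : Set (Ω → ℝ) :=
  {f | Measurable f ∧ ∀ ω, 0 ≤ f ω}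

/-- A randomized test: a measurable function with values in `[0,1]`. -/
def IsRandTest (X : Ω → ℝ) : Prop :=
  Measurable X ∧ ∀ ω, X ω ∈ Set.Icc (0 : ℝ) 1

/-- The feasible randomized tests for significance level `x` and null collection `H`. -/
def Tests (μ : Measure Ω) (H : Set (Ω → ℝ)) (x : ℝ) : Set (Ω → ℝ) :=
  {X | IsRandTest X ∧ ∀ h ∈ H, ∫ ω, h ω * X ω ∂μ ≤ x}

/-- The worst-case power of a test `X` over the alternative collection `G`. -/
noncomputable def powerInf (μ : Measure Ω) (G : Set (Ω → ℝ)) (X : Ω → ℝ) : ℝ :=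
  sInf ((fun g => ∫ ω, g ω * X ω ∂μ) '' G)

/-- The value of the randomized composite hypothesis testing problem. -/
noncomputable def V (μ : Measure Ω) (G H : Set (Ω → ℝ)) (x : ℝ) : ℝ :=
  sSup (powerInf μ G '' Tests μ H x)

/-- The value of the pure composite hypothesis testing problem. -/
noncomputable def V1 (μ : Measure Ω) (G H : Set (Ω → ℝ)) (x : ℝ) : ℝ :=
  sSup (powerInf μ G '' {X ∈ Tests μ H x | ∀ ω, X ω = 0 ∨ X ω = 1})

/-- The set `ℋₓ` of nonnegative random variables that satisfy the budget
constraint against every feasible randomized test. -/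
def HxSet (μ : Measure Ω) (H : Set (Ω → ℝ)) (x : ℝ) : Set (Ω → ℝ) :=
  {h | h ∈ L0plus Ω ∧ ∀ X ∈ Tests μ H x, ∫ ω, h ω * X ω ∂μ ≤ x}

/-- A set of (nonnegative) random variables is closed under convergence in probability,
as a subset of `L⁰⁺`. -/
def ClosedInProb (μ : Measure Ω) (S : Set (Ω → ℝ)) : Prop :=
  ∀ (f : ℕ → Ω → ℝ) (g : Ω → ℝ), (∀ n, f n ∈ S) → g ∈ L0plus Ω →
    TendstoInMeasure μ f Filter.atTop g → g ∈ S

/-- The closure of a set of random variables under convergence in probability. -/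
def clProb (μ : Measure Ω) (S : Set (Ω → ℝ)) : Set (Ω → ℝ) :=
  {g | ∃ f : ℕ → Ω → ℝ, (∀ n, f n ∈ S) ∧ TendstoInMeasure μ f Filter.atTop g}

/-- Assumption (A1): `𝒢, ℋ ⊆ L⁰⁺`, `sup_{X ∈ 𝒢∪ℋ} 𝔼[X] < ∞`, and `𝒢` is convex and
closed under convergence in probability. -/
def A1 (μ : Measure Ω) (G H : Set (Ω → ℝ)) : Prop :=
  G ⊆ L0plus Ω ∧ H ⊆ L0plus Ω ∧ (∀ f ∈ G ∪ H, Integrable f μ) ∧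
  BddAbove ((fun f => ∫ ω, f ω ∂μ) '' (G ∪ H)) ∧
  Convex ℝ G ∧ ClosedInProb μ G

/-- The smallest σ-algebra making every random variable in `G ∪ H` measurable. -/
def sigmaGen (G H : Set (Ω → ℝ)) : MeasurableSpace Ω :=
  ⨆ f ∈ G ∪ H, MeasurableSpace.comap f inferInstance

/-- The Neyman–Pearson conditions at level `x` for the tuple `(Ĝ, Ĥ, â, X̂, B)`. -/
def NPconds (μ : Measure Ω) (G H : Set (Ω → ℝ)) (x : ℝ)
    (Ghat Hhat : Ω → ℝ) (ahat : ℝ) (Xhat B : Ω → ℝ) : Prop :=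
  Ghat ∈ G ∧ Hhat ∈ clProb μ (convexHull ℝ H) ∧ 0 ≤ ahat ∧ Xhat ∈ Tests μ H x ∧
  Measurable B ∧ (∀ ω, B ω ∈ Set.Icc (0 : ℝ) 1) ∧
  (∀ ω, Xhat ω = (if ahat * Hhat ω < Ghat ω then 1 else 0)
      + B ω * (if Ghat ω = ahat * Hhat ω then 1 else 0)) ∧
  (∀ h ∈ H, ∫ ω, h ω * Xhat ω ∂μ ≤ ∫ ω, Hhat ω * Xhat ω ∂μ) ∧
  (∫ ω, Hhat ω * Xhat ω ∂μ = x) ∧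
  (∀ g ∈ G, ∫ ω, Ghat ω * Xhat ω ∂μ ≤ ∫ ω, g ω * Xhat ω ∂μ)

end QH

/-!
With singletons `𝒢 = {Ĝ}`, `ℋ = {Ĥ}` the power `𝔼[ĜX]` and the size `𝔼[ĤX]` are linear in the
test, so this is a Neyman–Pearson problem. If `x ≥ 𝔼[Ĥ]` the test `1_Ω` is optimal. Otherwise
choose the threshold `a ≥ 0` so that `𝔼[Ĥ; aĤ < Ĝ] ≤ x ≤ 𝔼[Ĥ; aĤ ≤ Ĝ]` and fill the gap with a
piece `{Y < c}` of the boundary `{Ĝ = aĤ}`: a variable with continuous c.d.f. has no atoms, so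
`c ↦ 𝔼[Ĥ; Ĝ = aĤ, Y < c]` is continuous and the intermediate value theorem applies. Since
`(Ĝ - aĤ)(1_A - X) ≥ 0`, the resulting indicator `1_A` beats every randomized test of size
`≤ x`, hence `V₁ = V`. Mixing optimal tests at levels `x` and `y` gives a test at level
`λx + (1-λ)y`, so `V` is concave, hence continuous on `(0, ∞)`.
-/

open Filter Topology Set

namespace QH

section Slicing

variable {Ω E : Type*} [MeasurableSpace Ω] {μ : Measure Ω}
  [NormedAddCommGroup E] [NormedSpace ℝ E]

theorem measure_preimage_singleton_eq_zero [IsFiniteMeasure μ] {Y : Ω → ℝ} (hY : Measurable Y)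
    (hcdf : Continuous fun y : ℝ => (μ {ω | Y ω < y}).toReal) (c : ℝ) :
    μ (Y ⁻¹' {c}) = 0 := by
  have hbound : ∀ y, c < y → μ.real (Y ⁻¹' {c}) + μ.real {ω | Y ω < c} ≤ μ.real {ω | Y ω < y} :=
    fun y hy => by
      rw [← measureReal_union (s₁ := Y ⁻¹' {c}) (s₂ := {ω | Y ω < c})
        (disjoint_left.2 fun ω h₁ h₂ => (ne_of_lt h₂) h₁) (hY measurableSet_Iio)]
      exact measureReal_mono (union_subset (fun ω h => (Set.mem_singleton_iff.1 h).trans_lt hy)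
        fun ω h => (show Y ω < c from h).trans hy)
  have hlim : Tendsto (fun y => μ.real {ω | Y ω < y}) (𝓝[>] c) (𝓝 (μ.real {ω | Y ω < c})) :=
    (hcdf.tendsto c).mono_left nhdsWithin_le_nhds
  have hle := ge_of_tendsto hlim (eventually_nhdsWithin_of_forall hbound)
  exact (measureReal_eq_zero_iff).1 (le_antisymm (by linarith) measureReal_nonneg)

theorem tendsto_setIntegral_of_ae_eventually_indicator_eq {ι : Type*} {l : Filter ι}
    [l.IsCountablyGenerated] {f : Ω → E} {s : ι → Set Ω} {t : Set Ω}
    (hs : ∀ i, MeasurableSet (s i)) (ht : MeasurableSet t) (hf : Integrable f μ)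
    (h : ∀ᵐ ω ∂μ, ∀ᶠ i in l, (s i).indicator f ω = t.indicator f ω) :
    Tendsto (fun i => ∫ ω in s i, f ω ∂μ) l (𝓝 (∫ ω in t, f ω ∂μ)) := by
  simp_rw [← integral_indicator (hs _), ← integral_indicator ht]
  refine tendsto_integral_filter_of_dominated_convergence (fun ω => ‖f ω‖)
    (.of_forall fun i => hf.aestronglyMeasurable.indicator (hs i))
    (.of_forall fun i => .of_forall fun ω => norm_indicator_le_norm_self _ _) hf.norm ?_
  filter_upwards [h] with ω hω using tendsto_const_nhds.congr' (hω.mono fun i hi => hi.symm)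

variable {Y : Ω → ℝ}

theorem continuous_setIntegral_preimage_Iio {f : Ω → E} (hY : Measurable Y)
    (hatom : ∀ c, μ (Y ⁻¹' {c}) = 0) (hf : Integrable f μ) :
    Continuous fun c => ∫ ω in Y ⁻¹' Iio c, f ω ∂μ := by
  refine continuous_iff_continuousAt.2 fun c => ?_
  refine tendsto_setIntegral_of_ae_eventually_indicator_eq (fun _ => hY measurableSet_Iio)
    (hY measurableSet_Iio) hf ?_
  filter_upwards [measure_eq_zero_iff_ae_notMem.1 (hatom c)] with ω hω
  rcases lt_or_gt_of_ne (show Y ω ≠ c from hω) with hlt | hgt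
  · filter_upwards [eventually_gt_nhds hlt] with b hb
    exact indicator_eq_indicator (iff_of_true hb hlt) rfl
  · filter_upwards [eventually_lt_nhds hgt] with b hb
    exact indicator_eq_indicator (iff_of_false hb.not_gt hgt.not_gt) rfl

theorem exists_setIntegral_eq {f : Ω → ℝ} (hY : Measurable Y) (hatom : ∀ c, μ (Y ⁻¹' {c}) = 0)
    (hf : Integrable f μ) {δ : ℝ} (hδ : δ ∈ Icc 0 (∫ ω, f ω ∂μ)) :
    ∃ S, MeasurableSet S ∧ ∫ ω in S, f ω ∂μ = δ := by
  rcases hδ.1.eq_or_lt with rfl | hδ0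
  · exact ⟨∅, .empty, by simp⟩
  rcases hδ.2.eq_or_lt with rfl | hδf
  · exact ⟨univ, .univ, setIntegral_univ⟩
  have hbot : Tendsto (fun c => ∫ ω in Y ⁻¹' Iio c, f ω ∂μ) atBot (𝓝 0) := by
    simpa using tendsto_setIntegral_of_ae_eventually_indicator_eq (t := ∅)
      (fun _ => hY measurableSet_Iio) .empty hf (.of_forall fun ω => by
        filter_upwards [eventually_le_atBot (Y ω)] with c hc
        exact indicator_eq_indicator (iff_of_false hc.not_gt id) rfl)
  have htop : Tendsto (fun c => ∫ ω in Y ⁻¹' Iio c, f ω ∂μ) atTop (𝓝 (∫ ω, f ω ∂μ)) := by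
    simpa using tendsto_setIntegral_of_ae_eventually_indicator_eq (t := univ)
      (fun _ => hY measurableSet_Iio) .univ hf (.of_forall fun ω => by
        filter_upwards [eventually_gt_atTop (Y ω)] with c hc
        exact indicator_eq_indicator (iff_of_true hc trivial) rfl)
  obtain ⟨a, ha⟩ := (hbot.eventually (eventually_lt_nhds hδ0)).exists
  obtain ⟨b, hb⟩ := (htop.eventually (eventually_gt_nhds hδf)).exists
  obtain ⟨c, hc⟩ := mem_range_of_exists_le_of_exists_ge
    (continuous_setIntegral_preimage_Iio hY hatom hf) ⟨a, ha.le⟩ ⟨b, hb.le⟩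
  exact ⟨Y ⁻¹' Iio c, hY measurableSet_Iio, hc⟩

theorem exists_subset_setIntegral_eq {f : Ω → ℝ} (hY : Measurable Y)
    (hatom : ∀ c, μ (Y ⁻¹' {c}) = 0) {D : Set Ω} (hD : MeasurableSet D)
    (hf : IntegrableOn f D μ) {δ : ℝ} (hδ : δ ∈ Icc 0 (∫ ω in D, f ω ∂μ)) :
    ∃ S ⊆ D, MeasurableSet S ∧ ∫ ω in S, f ω ∂μ = δ := by
  obtain ⟨S, hS, hSδ⟩ := exists_setIntegral_eq hY
    (fun c => le_antisymm ((Measure.restrict_apply_le D _).trans (hatom c).le) bot_le) hf hδ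
  exact ⟨S ∩ D, inter_subset_right, hS.inter hD, by rwa [Measure.restrict_restrict hS] at hSδ⟩

end Slicing

section NeymanPearson

variable {Ω : Type*} [MeasurableSpace Ω] {μ : Measure Ω} {g h X : Ω → ℝ}

theorem IsRandTest.integrable_mul (hX : IsRandTest X) (hg : Integrable g μ) :
    Integrable (fun ω => g ω * X ω) μ :=
  hg.mul_bdd hX.1.aestronglyMeasurable (c := 1) (.of_forall fun ω => by
    rw [Real.norm_eq_abs, abs_le]
    exact ⟨by linarith [(hX.2 ω).1], (hX.2 ω).2⟩)

theorem isRandTest_indicator_one {A : Set Ω} (hA : MeasurableSet A) :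
    IsRandTest (A.indicator fun _ => (1 : ℝ)) :=
  ⟨measurable_const.indicator hA, fun ω => by by_cases hω : ω ∈ A <;> simp [hω]⟩

theorem integral_mul_indicator_one {A : Set Ω} (hA : MeasurableSet A) :
    ∫ ω, g ω * A.indicator (fun _ => (1 : ℝ)) ω ∂μ = ∫ ω in A, g ω ∂μ := by
  simp_rw [← indicator_mul_right, mul_one, integral_indicator hA]

theorem integral_mul_le_setIntegral_of_threshold {a : ℝ} {A : Set Ω} (hA : MeasurableSet A)
    (ha : 0 ≤ a) (hg : Integrable g μ) (hh : Integrable h μ)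
    (hin : ∀ ω ∈ A, a * h ω ≤ g ω) (hout : ∀ ω ∉ A, g ω ≤ a * h ω) (hX : IsRandTest X)
    (hsize : ∫ ω, h ω * X ω ∂μ ≤ ∫ ω in A, h ω ∂μ) :
    ∫ ω, g ω * X ω ∂μ ≤ ∫ ω in A, g ω ∂μ := by
  set Z := A.indicator fun _ => (1 : ℝ)
  have hZ := isRandTest_indicator_one hA
  rw [← integral_mul_indicator_one hA] at hsize ⊢
  have hsign : 0 ≤ ∫ ω, (g ω - a * h ω) * (Z ω - X ω) ∂μ := by
    refine integral_nonneg fun ω => show 0 ≤ _ from ?_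
    by_cases hω : ω ∈ A
    · rw [show Z ω = 1 by simp [Z, hω]]
      exact mul_nonneg (sub_nonneg.2 (hin ω hω)) (sub_nonneg.2 (hX.2 ω).2)
    · rw [show Z ω = 0 by simp [Z, hω]]
      exact mul_nonneg_of_nonpos_of_nonpos (sub_nonpos.2 (hout ω hω)) (by linarith [(hX.2 ω).1])
  have hgZ := hZ.integrable_mul hg
  have hgX := hX.integrable_mul hg
  have hhZ := (hZ.integrable_mul hh).const_mul a
  have hhX := (hX.integrable_mul hh).const_mul a
  have hexpand : ∫ ω, (g ω - a * h ω) * (Z ω - X ω) ∂μ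
      = (∫ ω, g ω * Z ω ∂μ - ∫ ω, g ω * X ω ∂μ)
        - (a * ∫ ω, h ω * Z ω ∂μ - a * ∫ ω, h ω * X ω ∂μ) := by
    simp_rw [sub_mul, mul_sub, mul_assoc]
    rw [integral_sub (f := fun ω => g ω * Z ω - g ω * X ω)
        (g := fun ω => a * (h ω * Z ω) - a * (h ω * X ω)) (hgZ.sub hgX) (hhZ.sub hhX),
      integral_sub hgZ hgX, integral_sub hhZ hhX, integral_const_mul, integral_const_mul]
  nlinarith [mul_le_mul_of_nonneg_left hsize ha]

end NeymanPearson

theorem exists_threshold {φ ψ : ℝ → ℝ} {x : ℝ} (hφ : Antitone φ)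
    (hright : ∀ a, Tendsto φ (𝓝[>] a) (𝓝 (φ a))) (hleft : ∀ a, Tendsto φ (𝓝[<] a) (𝓝 (ψ a)))
    (hψ : x ≤ ψ 0) (hlarge : ∃ a, φ a ≤ x) :
    ∃ a, 0 ≤ a ∧ φ a ≤ x ∧ x ≤ ψ a := by
  set S := {a | 0 ≤ a ∧ φ a ≤ x}
  obtain ⟨b, hb⟩ := hlarge
  have hne : S.Nonempty := ⟨max b 0, le_max_right _ _, (hφ (le_max_left _ _)).trans hb⟩
  have hbdd : BddBelow S := ⟨0, fun _ ha => ha.1⟩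
  have hpos : 0 ≤ sInf S := le_csInf hne fun _ ha => ha.1
  have habove : ∀ a ∈ Ioi (sInf S), φ a ≤ x := fun a ha => by
    obtain ⟨s, hs, hsa⟩ := (csInf_lt_iff hbdd hne).1 ha
    exact (hφ hsa.le).trans hs.2
  refine ⟨sInf S, hpos, le_of_tendsto (hright _) (eventually_nhdsWithin_of_forall habove), ?_⟩
  rcases hpos.eq_or_lt with h0 | hpos
  · rwa [← h0]
  refine ge_of_tendsto (hleft _) ?_
  filter_upwards [Ioo_mem_nhdsLT hpos] with a ha
  by_contra! hax
  exact (csInf_le hbdd ⟨ha.1.le, hax.le⟩).not_gt ha.2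

section Threshold

variable {Ω : Type*} [MeasurableSpace Ω] {μ : Measure Ω} {g h : Ω → ℝ}

theorem antitone_setIntegral_mul_lt (hh0 : ∀ ω, 0 ≤ h ω) (hhi : Integrable h μ) :
    Antitone fun a => ∫ ω in {ω | a * h ω < g ω}, h ω ∂μ :=
  fun _ b hab => setIntegral_mono_set hhi.integrableOn (.of_forall fun ω => hh0 ω)
    (Eventually.of_forall fun ω (hω : b * h ω < g ω) =>
      (mul_le_mul_of_nonneg_right hab (hh0 ω)).trans_lt hω)

theorem tendsto_setIntegral_mul_lt_nhdsGT (hgm : Measurable g) (hhm : Measurable h)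
    (hh0 : ∀ ω, 0 ≤ h ω) (hhi : Integrable h μ) (a : ℝ) :
    Tendsto (fun b => ∫ ω in {ω | b * h ω < g ω}, h ω ∂μ) (𝓝[>] a)
      (𝓝 (∫ ω in {ω | a * h ω < g ω}, h ω ∂μ)) := by
  refine tendsto_setIntegral_of_ae_eventually_indicator_eq
    (fun b => measurableSet_lt (hhm.const_mul b) hgm) (measurableSet_lt (hhm.const_mul a) hgm)
    hhi (.of_forall fun ω => ?_)
  by_cases hlt : a * h ω < g ω
  · filter_upwards [nhdsWithin_le_nhds ((tendsto_id.mul_const (h ω)).eventually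
      (eventually_lt_nhds hlt))] with b hb
    exact indicator_eq_indicator (iff_of_true hb hlt) rfl
  · filter_upwards [self_mem_nhdsWithin] with b (hb : a < b)
    refine indicator_eq_indicator (iff_of_false (fun hb' => hlt ?_) hlt) rfl
    exact (mul_le_mul_of_nonneg_right hb.le (hh0 ω)).trans_lt hb'

theorem tendsto_setIntegral_mul_lt_nhdsLT (hgm : Measurable g) (hhm : Measurable h)
    (hh0 : ∀ ω, 0 ≤ h ω) (hhi : Integrable h μ) (a : ℝ) :
    Tendsto (fun b => ∫ ω in {ω | b * h ω < g ω}, h ω ∂μ) (𝓝[<] a)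
      (𝓝 (∫ ω in {ω | a * h ω ≤ g ω}, h ω ∂μ)) := by
  refine tendsto_setIntegral_of_ae_eventually_indicator_eq
    (fun b => measurableSet_lt (hhm.const_mul b) hgm) (measurableSet_le (hhm.const_mul a) hgm)
    hhi (.of_forall fun ω => ?_)
  rcases (hh0 ω).eq_or_lt with hzero | hpos
  · exact .of_forall fun b => by simp [indicator_apply, ← hzero]
  by_cases hle : a * h ω ≤ g ω
  · filter_upwards [self_mem_nhdsWithin] with b (hb : b < a)
    exact indicator_eq_indicator
      (iff_of_true ((mul_lt_mul_of_pos_right hb hpos).trans_le hle) hle) rfl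
  · filter_upwards [nhdsWithin_le_nhds ((tendsto_id.mul_const (h ω)).eventually
      (eventually_gt_nhds (not_le.1 hle)))] with b hb
    exact indicator_eq_indicator (iff_of_false hb.not_gt hle) rfl

theorem tendsto_setIntegral_mul_lt_atTop (hgm : Measurable g) (hhm : Measurable h)
    (hh0 : ∀ ω, 0 ≤ h ω) (hhi : Integrable h μ) :
    Tendsto (fun b => ∫ ω in {ω | b * h ω < g ω}, h ω ∂μ) atTop (𝓝 0) := by
  simpa using tendsto_setIntegral_of_ae_eventually_indicator_eq (t := ∅)
    (fun b => measurableSet_lt (hhm.const_mul b) hgm) .empty hhi (.of_forall fun ω => by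
      rcases (hh0 ω).eq_or_lt with hzero | hpos
      · exact .of_forall fun b => by simp [indicator_apply, ← hzero]
      filter_upwards [(tendsto_id.atTop_mul_const hpos).eventually (eventually_gt_atTop (g ω))]
        with b hb
      exact indicator_eq_indicator (iff_of_false hb.not_gt id) rfl)

theorem exists_neymanPearson_set {Y : Ω → ℝ} (hgm : Measurable g) (hg0 : ∀ ω, 0 ≤ g ω)
    (hhm : Measurable h) (hh0 : ∀ ω, 0 ≤ h ω) (hhi : Integrable h μ) (hY : Measurable Y)
    (hatom : ∀ c, μ (Y ⁻¹' {c}) = 0) {x : ℝ} (hx : 0 < x) (hxh : x < ∫ ω, h ω ∂μ) :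
    ∃ a A, 0 ≤ a ∧ MeasurableSet A ∧ (∀ ω ∈ A, a * h ω ≤ g ω) ∧ (∀ ω ∉ A, g ω ≤ a * h ω) ∧
      ∫ ω in A, h ω ∂μ = x := by
  have hψ0 : x ≤ ∫ ω in {ω | 0 * h ω ≤ g ω}, h ω ∂μ := by
    simpa [hg0] using hxh.le
  obtain ⟨a, ha0, hφa, hψa⟩ := exists_threshold (antitone_setIntegral_mul_lt hh0 hhi)
    (tendsto_setIntegral_mul_lt_nhdsGT hgm hhm hh0 hhi)
    (tendsto_setIntegral_mul_lt_nhdsLT hgm hhm hh0 hhi) hψ0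
    ((tendsto_setIntegral_mul_lt_atTop hgm hhm hh0 hhi).eventually (eventually_le_nhds hx)).exists
  set U := {ω | a * h ω < g ω}
  set D := {ω | a * h ω = g ω}
  have hU : MeasurableSet U := measurableSet_lt (hhm.const_mul a) hgm
  have hD : MeasurableSet D := measurableSet_eq_fun (hhm.const_mul a) hgm
  have hUD : Disjoint U D := disjoint_left.2 fun ω hlt heq => hlt.ne heq
  have hψsplit : ∫ ω in {ω | a * h ω ≤ g ω}, h ω ∂μ = ∫ ω in U, h ω ∂μ + ∫ ω in D, h ω ∂μ := by
    rw [← setIntegral_union hUD hD hhi.integrableOn hhi.integrableOn]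
    congr with ω
    exact le_iff_lt_or_eq
  obtain ⟨S, hSD, hS, hSx⟩ := exists_subset_setIntegral_eq hY hatom hD hhi.integrableOn
    (δ := x - ∫ ω in U, h ω ∂μ) ⟨by linarith, by linarith⟩
  refine ⟨a, U ∪ S, ha0, hU.union hS, fun ω hω => ?_, fun ω hω => ?_, ?_⟩
  · exact hω.elim (fun hωU => le_of_lt hωU) fun hωS => (hSD hωS).le
  · exact not_lt.1 fun hlt => hω (Or.inl hlt)
  · rw [setIntegral_union (hUD.mono_right hSD) hS hhi.integrableOn hhi.integrableOn, hSx]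
    ring

theorem exists_optimal_set {Y : Ω → ℝ} (hgm : Measurable g)
    (hg0 : ∀ ω, 0 ≤ g ω) (hgi : Integrable g μ) (hhm : Measurable h) (hh0 : ∀ ω, 0 ≤ h ω)
    (hhi : Integrable h μ) (hY : Measurable Y) (hatom : ∀ c, μ (Y ⁻¹' {c}) = 0) {x : ℝ}
    (hx : 0 < x) :
    ∃ A, MeasurableSet A ∧ ∫ ω in A, h ω ∂μ ≤ x ∧ ∀ X, IsRandTest X →
      ∫ ω, h ω * X ω ∂μ ≤ x → ∫ ω, g ω * X ω ∂μ ≤ ∫ ω in A, g ω ∂μ := by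
  rcases le_or_gt (∫ ω, h ω ∂μ) x with hsmall | hlarge
  · refine ⟨univ, .univ, by rwa [setIntegral_univ], fun X hX _ => ?_⟩
    refine integral_mul_le_setIntegral_of_threshold .univ le_rfl hgi hhi
      (fun ω _ => by simpa using hg0 ω) (fun ω hω => absurd (mem_univ ω) hω) hX ?_
    rw [setIntegral_univ]
    exact integral_mono (hX.integrable_mul hhi) hhi fun ω =>
      mul_le_of_le_one_right (hh0 ω) (hX.2 ω).2
  · obtain ⟨a, A, ha0, hA, hin, hout, hAx⟩ :=
      exists_neymanPearson_set hgm hg0 hhm hh0 hhi hY hatom hx hlarge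
    exact ⟨A, hA, hAx.le, fun X hX hXx =>
      integral_mul_le_setIntegral_of_threshold hA ha0 hgi hhi hin hout hX (hAx ▸ hXx)⟩

end Threshold

section Value

variable {Ω : Type*} [MeasurableSpace Ω] {μ : Measure Ω} {G H : Set (Ω → ℝ)} {g h X Z : Ω → ℝ}
  {x : ℝ}

theorem mem_Tests_singleton : X ∈ Tests μ {h} x ↔ IsRandTest X ∧ ∫ ω, h ω * X ω ∂μ ≤ x := by
  simp [Tests]

theorem powerInf_singleton : powerInf μ {g} X = ∫ ω, g ω * X ω ∂μ := by
  rw [powerInf, image_singleton, csInf_singleton]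

theorem exists_optimal_indicator {Y : Ω → ℝ} (hgm : Measurable g) (hg0 : ∀ ω, 0 ≤ g ω)
    (hgi : Integrable g μ) (hhm : Measurable h) (hh0 : ∀ ω, 0 ≤ h ω) (hhi : Integrable h μ)
    (hY : Measurable Y) (hatom : ∀ c, μ (Y ⁻¹' {c}) = 0) (hx : 0 < x) :
    ∃ A, MeasurableSet A ∧ A.indicator (fun _ => (1 : ℝ)) ∈ Tests μ {h} x ∧
      ∀ X ∈ Tests μ {h} x, powerInf μ {g} X ≤ powerInf μ {g} (A.indicator fun _ => 1) := by
  obtain ⟨A, hA, hAx, hAmax⟩ := exists_optimal_set hgm hg0 hgi hhm hh0 hhi hY hatom hx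
  refine ⟨A, hA, mem_Tests_singleton.2 ⟨isRandTest_indicator_one hA, ?_⟩, fun X hX => ?_⟩
  · rwa [integral_mul_indicator_one hA]
  · rw [mem_Tests_singleton] at hX
    rw [powerInf_singleton, powerInf_singleton, integral_mul_indicator_one hA]
    exact hAmax X hX.1 hX.2

theorem Tests_mono : Monotone (Tests μ H) :=
  fun _ _ hxy _ hX => ⟨hX.1, fun h hh => (hX.2 h hh).trans hxy⟩

theorem V_eq_powerInf (hZ : Z ∈ Tests μ H x)
    (hmax : ∀ X ∈ Tests μ H x, powerInf μ G X ≤ powerInf μ G Z) :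
    V μ G H x = powerInf μ G Z :=
  IsGreatest.csSup_eq ⟨mem_image_of_mem _ hZ, forall_mem_image.2 hmax⟩

theorem V1_eq_powerInf (hZ : Z ∈ Tests μ H x) (hpure : ∀ ω, Z ω = 0 ∨ Z ω = 1)
    (hmax : ∀ X ∈ Tests μ H x, powerInf μ G X ≤ powerInf μ G Z) :
    V1 μ G H x = powerInf μ G Z :=
  IsGreatest.csSup_eq ⟨mem_image_of_mem _ ⟨hZ, hpure⟩, forall_mem_image.2 fun X hX => hmax X hX.1⟩

theorem monotoneOn_V {s : Set ℝ} (hmax : ∀ x ∈ s, ∃ Z ∈ Tests μ H x,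
      ∀ X ∈ Tests μ H x, powerInf μ G X ≤ powerInf μ G Z) :
    MonotoneOn (V μ G H) s := by
  intro x hx y hy hxy
  obtain ⟨Zx, hZx, hmaxx⟩ := hmax x hx
  obtain ⟨Zy, hZy, hmaxy⟩ := hmax y hy
  rw [V_eq_powerInf hZx hmaxx, V_eq_powerInf hZy hmaxy]
  exact hmaxy Zx (Tests_mono hxy hZx)

theorem IsRandTest.smul_add_smul {X' : Ω → ℝ} (hX : IsRandTest X) (hX' : IsRandTest X')
    {a b : ℝ} (ha : 0 ≤ a) (hb : 0 ≤ b) (hab : a + b = 1) : IsRandTest (a • X + b • X') := by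
  refine ⟨(hX.1.const_smul a).add (hX'.1.const_smul b), fun ω => ⟨?_, ?_⟩⟩ <;>
    simp only [Pi.add_apply, Pi.smul_apply, smul_eq_mul]
  · nlinarith [(hX.2 ω).1, (hX'.2 ω).1]
  · nlinarith [(hX.2 ω).2, (hX'.2 ω).2]

theorem integral_mul_smul_add_smul {X' : Ω → ℝ} (hg : Integrable g μ) (hX : IsRandTest X)
    (hX' : IsRandTest X') (a b : ℝ) :
    ∫ ω, g ω * (a • X + b • X') ω ∂μ = a * ∫ ω, g ω * X ω ∂μ + b * ∫ ω, g ω * X' ω ∂μ := by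
  simp only [Pi.add_apply, Pi.smul_apply, smul_eq_mul, mul_add, mul_left_comm (g _)]
  rw [integral_add ((hX.integrable_mul hg).const_mul a) ((hX'.integrable_mul hg).const_mul b),
    integral_const_mul, integral_const_mul]

theorem concaveOn_V_singleton {s : Set ℝ} (hs : Convex ℝ s) (hg : Integrable g μ)
    (hh : Integrable h μ) (hmax : ∀ x ∈ s, ∃ Z ∈ Tests μ {h} x,
      ∀ X ∈ Tests μ {h} x, powerInf μ {g} X ≤ powerInf μ {g} Z) :
    ConcaveOn ℝ s (V μ {g} {h}) := by
  refine ⟨hs, fun x hx y hy a b ha hb hab => ?_⟩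
  obtain ⟨Zx, hZx, hmaxx⟩ := hmax x hx
  obtain ⟨Zy, hZy, hmaxy⟩ := hmax y hy
  obtain ⟨Z, hZ, hmaxZ⟩ := hmax _ (hs hx hy ha hb hab)
  rw [mem_Tests_singleton] at hZx hZy
  have hmix : a • Zx + b • Zy ∈ Tests μ {h} (a • x + b • y) := by
    refine mem_Tests_singleton.2 ⟨hZx.1.smul_add_smul hZy.1 ha hb hab, ?_⟩
    rw [integral_mul_smul_add_smul hh hZx.1 hZy.1, smul_eq_mul, smul_eq_mul]
    exact add_le_add (mul_le_mul_of_nonneg_left hZx.2 ha) (mul_le_mul_of_nonneg_left hZy.2 hb)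
  have hvalue := hmaxZ _ hmix
  rw [V_eq_powerInf (mem_Tests_singleton.2 hZx) hmaxx,
    V_eq_powerInf (mem_Tests_singleton.2 hZy) hmaxy, V_eq_powerInf hZ hmaxZ]
  simp only [powerInf_singleton, smul_eq_mul] at hvalue ⊢
  rwa [integral_mul_smul_add_smul hg hZx.1 hZy.1] at hvalue

end Value

end QH

/-- Condition C1: If `𝒢 = {Ĝ}` and `ℋ = {Ĥ}` are singletons of integrable
nonnegative random variables and there exists an `𝓕`-measurable random variable with
continuous c.d.f. under `ℙ`, then `V₁ = V` on `(0,∞)`, for every `x > 0` a pure test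
attains both values, and `V₁` is continuous, concave, and non-decreasing on `(0,∞)`. -/
theorem stmt_12 {Ω : Type*} [MeasurableSpace Ω] (μ : MeasureTheory.Measure Ω)
    [MeasureTheory.IsProbabilityMeasure μ]
    (Ghat Hhat : Ω → ℝ)
    (hGm : Measurable Ghat) (hGpos : ∀ ω, 0 ≤ Ghat ω) (hGi : MeasureTheory.Integrable Ghat μ)
    (hHm : Measurable Hhat) (hHpos : ∀ ω, 0 ≤ Hhat ω) (hHi : MeasureTheory.Integrable Hhat μ)
    (hY : ∃ Y : Ω → ℝ, Measurable Y ∧ Continuous fun y : ℝ => (μ {ω | Y ω < y}).toReal) :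
    (∀ x : ℝ, 0 < x → QH.V1 μ {Ghat} {Hhat} x = QH.V μ {Ghat} {Hhat} x) ∧
    (∀ x : ℝ, 0 < x → ∃ A : Set Ω, MeasurableSet A ∧
      Set.indicator A (fun _ => (1 : ℝ)) ∈ QH.Tests μ {Hhat} x ∧
      QH.powerInf μ {Ghat} (Set.indicator A (fun _ => (1 : ℝ))) = QH.V μ {Ghat} {Hhat} x ∧
      QH.powerInf μ {Ghat} (Set.indicator A (fun _ => (1 : ℝ))) = QH.V1 μ {Ghat} {Hhat} x) ∧
    ContinuousOn (QH.V1 μ {Ghat} {Hhat}) (Set.Ioi 0) ∧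
    ConcaveOn ℝ (Set.Ioi 0) (QH.V1 μ {Ghat} {Hhat}) ∧
    MonotoneOn (QH.V1 μ {Ghat} {Hhat}) (Set.Ioi 0) := by
  obtain ⟨Y, hYm, hcdf⟩ := hY
  have hopt : ∀ x ∈ Ioi (0 : ℝ), ∃ A, MeasurableSet A ∧
      A.indicator (fun _ => (1 : ℝ)) ∈ QH.Tests μ {Hhat} x ∧ ∀ X ∈ QH.Tests μ {Hhat} x,
        QH.powerInf μ {Ghat} X ≤ QH.powerInf μ {Ghat} (A.indicator fun _ => 1) := fun x hx =>
    QH.exists_optimal_indicator hGm hGpos hGi hHm hHpos hHi hYm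
      (QH.measure_preimage_singleton_eq_zero hYm hcdf) hx
  have hmax : ∀ x ∈ Ioi (0 : ℝ), ∃ Z ∈ QH.Tests μ {Hhat} x, ∀ X ∈ QH.Tests μ {Hhat} x,
      QH.powerInf μ {Ghat} X ≤ QH.powerInf μ {Ghat} Z := fun x hx =>
    let ⟨A, _, hAT, hAmax⟩ := hopt x hx; ⟨_, hAT, hAmax⟩
  have hV1 : EqOn (QH.V μ {Ghat} {Hhat}) (QH.V1 μ {Ghat} {Hhat}) (Ioi 0) := fun x hx => by
    obtain ⟨A, -, hAT, hAmax⟩ := hopt x hx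
    rw [QH.V_eq_powerInf hAT hAmax,
      QH.V1_eq_powerInf hAT (indicator_eq_zero_or_self _ _) hAmax]
  have hconc := (QH.concaveOn_V_singleton (convex_Ioi 0) hGi hHi hmax).congr hV1
  refine ⟨fun x hx => (hV1 hx).symm, fun x hx => ?_, hconc.continuousOn isOpen_Ioi, hconc,
    (QH.monotoneOn_V hmax).congr hV1⟩
  obtain ⟨A, hA, hAT, hAmax⟩ := hopt x hx
  exact ⟨A, hA, hAT, (QH.V_eq_powerInf hAT hAmax).symm,
    (QH.V1_eq_powerInf hAT (indicator_eq_zero_or_self _ _) hAmax).symm⟩
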